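/- Fix k ≥ 1 and n ≥ 2. There exists a constant c > 0 depending only on k and n such that for all 0 < σ < 1/2 and all 0 < δ < 1 with 1/δ ∈ ℕ, 2δ^{1-σ} ≤ 1 and δ^{σ-1} ≥ 200k³, the following holds: define F_k : ℝ^{n-1} → ℝ by F_k(ξ) = ∏_{j=1}^{n-1} g_k(ξ_j) and u_k(x,t) = ∫_{ℝ^{n-1}} e^{-πit|ξ|² + 2πi x·ξ} F_k(ξ) dξ. Then for every point (x,t) with x_j = ∑_{m=1}^k p_{j,m} δ^{-σ-m+1} and t = 2∑_{m=1}^k q_m δ^{-2σ-m+1}, where p_{j,m}, q_m ∈ ℕ satisfy p_{j,m} ≤ δ^{σ-1}/(100k³) and q_m ≤ δ^{2σ-1}/(100k³), one has |u_k(x,t)| ≥ c δ^{k(n-1)(1-σ)}. -/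

import Mathlib

open Real MeasureTheory

/-- The self-similar function
`g_k = ∑_{1 ≤ ℓ_1,…,ℓ_k ≤ δ^{-σ}} χ_{{s : |s - (ℓ_1δ^σ + ⋯ + ℓ_kδ^{σ+k-1})| ≤ δ^k}}`. -/
noncomputable def gk (k : ℕ) (δ σ : ℝ) (x : ℝ) : ℝ :=
  ∑ ℓ ∈ Fintype.piFinset (fun _ : Fin k => Finset.Icc 1 ⌊δ ^ (-σ)⌋₊),
    Set.indicator {s : ℝ | |s - ∑ r : Fin k, (ℓ r : ℝ) * δ ^ (σ + (r : ℕ))| ≤ δ ^ k}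
      (fun _ => (1 : ℝ)) x

/-- The solution `u_k(x,t) = ∫_{ℝ^{n-1}} e^{-πit|ξ|² + 2πi x·ξ} ∏_j g_k(ξ_j) dξ`. -/
noncomputable def schrodingerSolK (k n : ℕ) (δ σ : ℝ)
    (x : EuclideanSpace ℝ (Fin (n-1))) (t : ℝ) : ℂ :=
  ∫ ξ : EuclideanSpace ℝ (Fin (n-1)),
    Complex.exp (((-(π * t * ‖ξ‖ ^ 2) + 2 * π * (inner ℝ x ξ : ℝ) : ℝ) : ℂ) * Complex.I)
      * ((∏ j, gk k δ σ (ξ j) : ℝ) : ℂ)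

/-!
The integrand factors over the coordinates, so `u_k(x,t)` is a product of `n - 1` integrals
`∫ e^{2πi(x_j ξ - (t/2) ξ²)} g_k(ξ) dξ`, and `g_k` is a sum of `⌊δ^{-σ}⌋^k` indicators of
intervals of radius `δ^k` around the points `a = ∑ ℓ_r δ^{σ+r}`. Expanding `x_j a` and
`(t/2) a²` gives terms `p ℓ δ^{r-m}` and `q ℓ ℓ' δ^{r+r'-m}`: those with a nonpositive exponent
are integers because `δ⁻¹ ∈ ℕ`, and the bounds on `p` and `q` make all the others tiny, as
well as the change caused by moving `ξ` within `δ^k` of `a`. Hence on each interval the phase is within `6/100` of an integer, the cosine of `2π` times it is at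
least `1/2`, and every factor has real part at least `⌊δ^{-σ}⌋^k δ^k ≥ (δ^{1-σ}/2)^k`.
-/

lemma exists_int_abs_sum_sub_le {ι : Type*} (s : Finset ι) (f ε : ι → ℝ)
    (h : ∀ i ∈ s, ∃ M : ℤ, |f i - M| ≤ ε i) :
    ∃ M : ℤ, |∑ i ∈ s, f i - M| ≤ ∑ i ∈ s, ε i := by
  choose! M hM using h
  refine ⟨∑ i ∈ s, M i, ?_⟩
  push_cast
  rw [← Finset.sum_sub_distrib]
  exact (Finset.abs_sum_le_sum_abs _ _).trans (Finset.sum_le_sum hM)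

section Lattice

variable {δ : ℝ} {N k : ℕ}

lemma exists_int_abs_natCast_mul_zpow_sub_le (hδ : 0 < δ) (hδ1 : δ ≤ 1) (hN : δ⁻¹ = N)
    (C : ℕ) (e : ℤ) : ∃ M : ℤ, |C * δ ^ e - M| ≤ C * δ := by
  rcases le_or_gt e 0 with he | he
  · have hpow : δ ^ e = (N : ℝ) ^ (-e).toNat := by
      rw [← hN, inv_pow, ← zpow_natCast, Int.toNat_of_nonneg (by omega), zpow_neg, inv_inv]
    refine ⟨C * N ^ (-e).toNat, ?_⟩
    push_cast [hpow]
    rw [sub_self, abs_zero]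
    positivity
  · have hpow : δ ^ e ≤ δ := by
      simpa using zpow_le_zpow_right_of_le_one₀ hδ hδ1 (show (1 : ℤ) ≤ e by omega)
    refine ⟨0, ?_⟩
    rw [Int.cast_zero, sub_zero, abs_of_nonneg (by positivity)]
    gcongr

lemma exists_int_abs_sum_natCast_mul_zpow_sub_le (hδ : 0 < δ) (hδ1 : δ ≤ 1) (hN : δ⁻¹ = N)
    {ι : Type*} (s : Finset ι) (C : ι → ℕ) (e : ι → ℤ) {ε : ℝ} (hC : ∀ i ∈ s, C i * δ ≤ ε) :
    ∃ M : ℤ, |∑ i ∈ s, C i * δ ^ e i - M| ≤ s.card * ε := by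
  simpa using exists_int_abs_sum_sub_le s _ (fun _ => ε) fun i hi =>
    (exists_int_abs_natCast_mul_zpow_sub_le hδ hδ1 hN (C i) (e i)).imp
      fun _ h => h.trans (hC i hi)

lemma rpow_mul_rpow_eq_zpow (hδ : 0 < δ) {a b : ℝ} {e : ℤ} (h : a + b = e) :
    δ ^ a * δ ^ b = δ ^ e := by
  rw [← Real.rpow_add hδ, h, Real.rpow_intCast]

lemma exists_int_abs_mul_sub_le (hδ : 0 < δ) (hδ1 : δ ≤ 1) (hN : δ⁻¹ = N) (σ : ℝ) {ε : ℝ}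
    (p ℓ : Fin k → ℕ) (hε : ∀ m r, p m * ℓ r * δ ≤ ε) :
    ∃ M : ℤ, |(∑ m : Fin k, (p m : ℝ) * δ ^ (-σ - (m : ℕ))) *
      (∑ r : Fin k, (ℓ r : ℝ) * δ ^ (σ + (r : ℕ))) - M| ≤ k ^ 2 * ε := by
  have hexpand : (∑ m : Fin k, (p m : ℝ) * δ ^ (-σ - (m : ℕ))) *
      (∑ r : Fin k, (ℓ r : ℝ) * δ ^ (σ + (r : ℕ))) =
      ∑ i : Fin k × Fin k, ((p i.1 * ℓ i.2 : ℕ) : ℝ) * δ ^ ((i.2 : ℕ) - (i.1 : ℕ) : ℤ) := by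
    rw [Finset.sum_mul_sum, Fintype.sum_prod_type]
    refine Finset.sum_congr rfl fun m _ => Finset.sum_congr rfl fun r _ => ?_
    rw [mul_mul_mul_comm, Nat.cast_mul,
      rpow_mul_rpow_eq_zpow hδ (e := (r : ℕ) - (m : ℕ)) (by push_cast; ring)]
  obtain ⟨M, hM⟩ := exists_int_abs_sum_natCast_mul_zpow_sub_le hδ hδ1 hN Finset.univ
    (fun i : Fin k × Fin k => p i.1 * ℓ i.2) (fun i => (i.2 : ℕ) - (i.1 : ℕ))
    fun i _ => by push_cast; exact hε i.1 i.2
  refine ⟨M, ?_⟩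
  rw [hexpand]
  simpa [sq] using hM

lemma exists_int_abs_mul_sq_sub_le (hδ : 0 < δ) (hδ1 : δ ≤ 1) (hN : δ⁻¹ = N) (σ : ℝ) {ε : ℝ}
    (q ℓ : Fin k → ℕ) (hε : ∀ m r r', q m * ℓ r * ℓ r' * δ ≤ ε) :
    ∃ M : ℤ, |(∑ m : Fin k, (q m : ℝ) * δ ^ (-(2 * σ) - (m : ℕ))) *
      (∑ r : Fin k, (ℓ r : ℝ) * δ ^ (σ + (r : ℕ))) ^ 2 - M| ≤ k ^ 3 * ε := by
  have hexpand : (∑ m : Fin k, (q m : ℝ) * δ ^ (-(2 * σ) - (m : ℕ))) *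
      (∑ r : Fin k, (ℓ r : ℝ) * δ ^ (σ + (r : ℕ))) ^ 2 =
      ∑ i : Fin k × Fin k × Fin k, ((q i.1 * ℓ i.2.1 * ℓ i.2.2 : ℕ) : ℝ) *
        δ ^ ((i.2.1 : ℕ) + (i.2.2 : ℕ) - (i.1 : ℕ) : ℤ) := by
    rw [sq, Finset.sum_mul_sum, Finset.sum_mul_sum, Fintype.sum_prod_type]
    refine Finset.sum_congr rfl fun m _ => ?_
    rw [Fintype.sum_prod_type]
    refine Finset.sum_congr rfl fun r _ => ?_
    rw [Finset.mul_sum]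
    refine Finset.sum_congr rfl fun r' _ => ?_
    have hpow := rpow_mul_rpow_eq_zpow hδ (a := -(2 * σ) - (m : ℕ) + (σ + (r : ℕ)))
      (b := σ + (r' : ℕ)) (e := (r : ℕ) + (r' : ℕ) - (m : ℕ)) (by push_cast; ring)
    rw [Real.rpow_add hδ] at hpow
    rw [Nat.cast_mul, Nat.cast_mul, ← hpow]
    ring
  obtain ⟨M, hM⟩ := exists_int_abs_sum_natCast_mul_zpow_sub_le hδ hδ1 hN Finset.univ
    (fun i : Fin k × Fin k × Fin k => q i.1 * ℓ i.2.1 * ℓ i.2.2)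
    (fun i => (i.2.1 : ℕ) + (i.2.2 : ℕ) - (i.1 : ℕ))
    fun i _ => by push_cast; exact hε i.1 i.2.1 i.2.2
  refine ⟨M, ?_⟩
  rw [hexpand]
  simpa [pow_succ, mul_assoc] using hM

end Lattice

section Phase

variable {δ : ℝ} {k : ℕ}

lemma sum_natCast_mul_rpow_mul_pow_le (hδ : 0 < δ) (hδ1 : δ ≤ 1) {γ K : ℝ} (hK : 0 < K)
    (p : Fin k → ℕ) (hp : ∀ m, (p m : ℝ) ≤ δ ^ (γ - 1) / K) :
    (∑ m : Fin k, (p m : ℝ) * δ ^ (-γ - (m : ℕ))) * δ ^ k ≤ k / K := by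
  rw [Finset.sum_mul, ← Real.rpow_natCast]
  calc _ ≤ ∑ _m : Fin k, 1 / K := Finset.sum_le_sum fun m _ => ?_
    _ = k / K := by simp [div_eq_mul_inv]
  have hm : (m : ℕ) + 1 ≤ (k : ℝ) := by exact_mod_cast m.isLt
  calc (p m : ℝ) * δ ^ (-γ - (m : ℕ)) * δ ^ (k : ℝ)
      ≤ δ ^ (γ - 1) / K * δ ^ (-γ - (m : ℕ)) * δ ^ (k : ℝ) := by gcongr; exact hp m
    _ = δ ^ (γ - 1 + (-γ - (m : ℕ)) + k) / K := by
      rw [Real.rpow_add hδ, Real.rpow_add hδ]; ring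
    _ ≤ 1 / K := by
      gcongr
      exact Real.rpow_le_one hδ.le hδ1 (by linarith)

lemma sum_natCast_mul_rpow_add_le (hδ : 0 < δ) (hδ1 : δ ≤ 1) {σ : ℝ} (ℓ : Fin k → ℕ)
    (hℓ : ∀ r, (ℓ r : ℝ) ≤ δ ^ (-σ)) : ∑ r : Fin k, (ℓ r : ℝ) * δ ^ (σ + (r : ℕ)) ≤ k := by
  calc _ ≤ ∑ _r : Fin k, (1 : ℝ) := Finset.sum_le_sum fun r _ => ?_
    _ = k := by simp
  calc (ℓ r : ℝ) * δ ^ (σ + (r : ℕ)) ≤ δ ^ (-σ) * δ ^ (σ + (r : ℕ)) := by gcongr; exact hℓ r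
    _ = δ ^ (-σ + (σ + (r : ℕ))) := (Real.rpow_add hδ _ _).symm
    _ ≤ 1 := Real.rpow_le_one hδ.le hδ1 (by rw [neg_add_cancel_left]; positivity)

lemma mul_mul_le_one_div_of_le_rpow (hδ : 0 < δ) {γ K P L : ℝ} (hK : 0 < K)
    (hP : P ≤ δ ^ (γ - 1) / K) (hL₀ : 0 ≤ L) (hL : L ≤ δ ^ (-γ)) : P * L * δ ≤ 1 / K := by
  calc P * L * δ ≤ δ ^ (γ - 1) / K * δ ^ (-γ) * δ ^ (1 : ℝ) := by
        rw [Real.rpow_one]; gcongr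
    _ = δ ^ (γ - 1 + -γ + 1) / K := by rw [Real.rpow_add hδ, Real.rpow_add hδ]; ring
    _ = 1 / K := by rw [show γ - 1 + -γ + 1 = 0 by ring, Real.rpow_zero]

lemma abs_mul_sub_mul_sq_sub_int_le {x s : ℝ} (hx : 0 ≤ x) (hs : 0 ≤ s) (a ξ : ℝ) (M₁ M₂ : ℤ) :
    |x * ξ - s * ξ ^ 2 - ((M₁ - M₂ : ℤ) : ℝ)| ≤
      |x * a - M₁| + |s * a ^ 2 - M₂| + x * |ξ - a| + s * (|ξ + a| * |ξ - a|) := by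
  calc |x * ξ - s * ξ ^ 2 - ((M₁ - M₂ : ℤ) : ℝ)|
      = |(x * a - M₁) - (s * a ^ 2 - M₂) + x * (ξ - a) - s * ((ξ + a) * (ξ - a))| := by
        push_cast; ring_nf
    _ ≤ |x * a - M₁| + |s * a ^ 2 - M₂| + |x * (ξ - a)| + |s * ((ξ + a) * (ξ - a))| := by
        refine (abs_sub _ _).trans ?_
        gcongr
        refine (abs_add_le _ _).trans ?_
        gcongr
        exact abs_sub _ _
    _ = _ := by rw [abs_mul, abs_mul, abs_mul, abs_of_nonneg hx, abs_of_nonneg hs]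

lemma exists_int_abs_phase_sub_le (hδ : 0 < δ) (hδ1 : δ ≤ 1) {N : ℕ} (hN : δ⁻¹ = N)
    (hk : 1 ≤ k) {σ : ℝ} (p q ℓ : Fin k → ℕ)
    (hp : ∀ m, (p m : ℝ) ≤ δ ^ (σ - 1) / (100 * (k : ℝ) ^ 3))
    (hq : ∀ m, (q m : ℝ) ≤ δ ^ (2 * σ - 1) / (100 * (k : ℝ) ^ 3))
    (hℓ : ∀ r, (ℓ r : ℝ) ≤ δ ^ (-σ)) {ξ : ℝ}
    (hξ : |ξ - ∑ r : Fin k, (ℓ r : ℝ) * δ ^ (σ + (r : ℕ))| ≤ δ ^ k) :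
    ∃ M : ℤ, |(∑ m : Fin k, (p m : ℝ) * δ ^ (-σ - (m : ℕ))) * ξ -
      (∑ m : Fin k, (q m : ℝ) * δ ^ (-(2 * σ) - (m : ℕ))) * ξ ^ 2 - M| ≤ 6 / 100 := by
  set x := ∑ m : Fin k, (p m : ℝ) * δ ^ (-σ - (m : ℕ))
  set s := ∑ m : Fin k, (q m : ℝ) * δ ^ (-(2 * σ) - (m : ℕ))
  set a := ∑ r : Fin k, (ℓ r : ℝ) * δ ^ (σ + (r : ℕ))
  set K : ℝ := 100 * (k : ℝ) ^ 3 with hK_def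
  have hk1 : (1 : ℝ) ≤ k := by exact_mod_cast hk
  have hK : 0 < K := by positivity
  obtain ⟨M₁, hM₁⟩ := exists_int_abs_mul_sub_le hδ hδ1 hN σ p ℓ fun m r =>
    mul_mul_le_one_div_of_le_rpow hδ hK (hp m) (Nat.cast_nonneg _) (hℓ r)
  obtain ⟨M₂, hM₂⟩ := exists_int_abs_mul_sq_sub_le hδ hδ1 hN σ q ℓ fun m r r' => by
    rw [mul_assoc (q m : ℝ)]
    refine mul_mul_le_one_div_of_le_rpow hδ hK (hq m) (by positivity) ?_
    calc (ℓ r : ℝ) * ℓ r' ≤ δ ^ (-σ) * δ ^ (-σ) := by gcongr; exacts [hℓ r, hℓ r']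
      _ = δ ^ (-(2 * σ)) := by rw [← Real.rpow_add hδ]; ring_nf
  have hx : x * δ ^ k ≤ k / K := sum_natCast_mul_rpow_mul_pow_le hδ hδ1 hK p hp
  have hs : s * δ ^ k ≤ k / K := sum_natCast_mul_rpow_mul_pow_le hδ hδ1 hK q hq
  have ha : a ≤ k := sum_natCast_mul_rpow_add_le hδ hδ1 ℓ hℓ
  have hx0 : 0 ≤ x := by positivity
  have hs0 : 0 ≤ s := by positivity
  have hξa : |ξ + a| ≤ 3 * k := by
    have hδk : δ ^ k ≤ 1 := pow_le_one₀ hδ.le hδ1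
    calc |ξ + a| = |(ξ - a) + 2 * a| := by ring_nf
      _ ≤ |ξ - a| + |2 * a| := abs_add_le _ _
      _ ≤ 3 * k := by rw [abs_of_nonneg (by positivity : (0 : ℝ) ≤ 2 * a)]; linarith
  refine ⟨M₁ - M₂, (abs_mul_sub_mul_sq_sub_int_le hx0 hs0 a ξ M₁ M₂).trans ?_⟩
  calc _ ≤ k ^ 2 * (1 / K) + k ^ 3 * (1 / K) + x * δ ^ k + s * (3 * k * δ ^ k) := by gcongr
    _ ≤ k ^ 2 * (1 / K) + k ^ 3 * (1 / K) + k / K + 3 * k * (k / K) := by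
        linarith [mul_le_mul_of_nonneg_left hs (by positivity : (0 : ℝ) ≤ 3 * k)]
    _ = (k + 4 * k ^ 2 + k ^ 3) / K := by ring
    _ ≤ 6 * k ^ 3 / K := by
        gcongr
        nlinarith [pow_le_pow_right₀ hk1 (show 1 ≤ 3 by norm_num),
          pow_le_pow_right₀ hk1 (show 2 ≤ 3 by norm_num)]
    _ = 6 / 100 := by
        rw [hK_def]
        field_simp

end Phase

lemma half_le_cos_two_pi_mul {y : ℝ} {M : ℤ} (h : |y - M| ≤ 1 / 6) : 1 / 2 ≤ cos (2 * π * y) := by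
  have habs : |2 * π * (y - M)| ≤ π / 3 := by
    rw [abs_mul, abs_of_pos (by positivity : 0 < 2 * π)]
    nlinarith [pi_pos]
  calc (1 : ℝ) / 2 = cos (π / 3) := cos_pi_div_three.symm
    _ ≤ cos |2 * π * (y - M)| :=
      cos_le_cos_of_nonneg_of_le_pi (abs_nonneg _) (by linarith [pi_pos]) habs
    _ = cos (2 * π * y) := by
      rw [cos_abs, show 2 * π * (y - M) = 2 * π * y - M * (2 * π) by ring,
        cos_sub_int_mul_two_pi]

lemma le_re_integral_mul_sum_indicator {ι : Type*} (S : Finset ι) (c : ι → ℝ) {r b : ℝ}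
    (hr : 0 ≤ r) {f : ℝ → ℂ} (hf : Continuous f)
    (hb : ∀ i ∈ S, ∀ ξ, |ξ - c i| ≤ r → b ≤ (f ξ).re) :
    S.card * (2 * r * b) ≤
      (∫ ξ, f ξ * ((∑ i ∈ S, {s : ℝ | |s - c i| ≤ r}.indicator (fun _ => (1 : ℝ)) ξ : ℝ) :
        ℂ)).re := by
  have hball : ∀ i, {s : ℝ | |s - c i| ≤ r} = Metric.closedBall (c i) r := fun i => by
    ext s; simp [Real.dist_eq]
  have hint : ∀ i, IntegrableOn f (Metric.closedBall (c i) r) :=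
    fun i => hf.continuousOn.integrableOn_compact (isCompact_closedBall _ _)
  have hsplit : (fun ξ => f ξ * ((∑ i ∈ S, {s : ℝ | |s - c i| ≤ r}.indicator
      (fun _ => (1 : ℝ)) ξ : ℝ) : ℂ)) =
      fun ξ => ∑ i ∈ S, (Metric.closedBall (c i) r).indicator f ξ := by
    funext ξ
    simp only [Complex.ofReal_sum, Finset.mul_sum, hball]
    refine Finset.sum_congr rfl fun i _ => ?_
    by_cases hξ : ξ ∈ Metric.closedBall (c i) r <;> simp [hξ]
  rw [hsplit, integral_finsetSum S fun i _ => (integrable_indicator_iff measurableSet_closedBall).2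
    (hint i), Complex.re_sum, ← nsmul_eq_mul]
  refine Finset.card_nsmul_le_sum S _ _ fun i hi => ?_
  rw [integral_indicator measurableSet_closedBall, ← RCLike.re_to_complex, ← integral_re (hint i)]
  calc 2 * r * b = volume.real (Metric.closedBall (c i) r) • b := by
        rw [Real.volume_real_closedBall hr, smul_eq_mul]
    _ ≤ ∫ ξ in Metric.closedBall (c i) r, RCLike.re (f ξ) :=
        setIntegral_ge_of_const_le measurableSet_closedBall measure_closedBall_lt_top.ne
          (fun ξ hξ => hb i hi ξ (by simpa [Real.dist_eq] using hξ))
          (hint i).re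

lemma div_two_le_natFloor {y : ℝ} (hy : 1 ≤ y) : y / 2 ≤ ⌊y⌋₊ := by
  rcases le_or_gt 2 y with h | h
  · linarith [Nat.sub_one_lt_floor y]
  · have : (1 : ℝ) ≤ ⌊y⌋₊ := by exact_mod_cast Nat.le_floor (by exact_mod_cast hy)
    linarith

noncomputable def schrodingerSolKOneDim (k : ℕ) (δ σ y t : ℝ) : ℂ :=
  ∫ ξ : ℝ, Complex.exp (((-(π * t * ξ ^ 2) + 2 * π * (y * ξ) : ℝ) : ℂ) * Complex.I) *
    ((gk k δ σ ξ : ℝ) : ℂ)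

lemma integral_euclideanSpace_prod_eq_prod {ι : Type*} [Fintype ι] (F : ι → ℝ → ℂ) :
    ∫ ξ : EuclideanSpace ℝ ι, ∏ i, F i (ξ i) = ∏ i, ∫ s, F i s := by
  rw [← integral_fintype_prod_eq_prod F]
  exact (EuclideanSpace.volume_preserving_symm_measurableEquiv_toLp ι).integral_comp'
    fun y : ι → ℝ => ∏ i, F i (y i)

lemma schrodingerSolK_eq_prod (k n : ℕ) (δ σ : ℝ) (x : EuclideanSpace ℝ (Fin (n - 1))) (t : ℝ) :
    schrodingerSolK k n δ σ x t = ∏ j, schrodingerSolKOneDim k δ σ (x j) t := by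
  let F : Fin (n - 1) → ℝ → ℂ := fun j s =>
    Complex.exp (((-(π * t * s ^ 2) + 2 * π * (x j * s) : ℝ) : ℂ) * Complex.I) *
      ((gk k δ σ s : ℝ) : ℂ)
  have hsplit : ∀ ξ : EuclideanSpace ℝ (Fin (n - 1)),
      Complex.exp (((-(π * t * ‖ξ‖ ^ 2) + 2 * π * (inner ℝ x ξ : ℝ) : ℝ) : ℂ) * Complex.I) *
        ((∏ j, gk k δ σ (ξ j) : ℝ) : ℂ) = ∏ j, F j (ξ j) := by
    intro ξ
    have hphase : -(π * t * ‖ξ‖ ^ 2) + 2 * π * (inner ℝ x ξ : ℝ) =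
        ∑ j, (-(π * t * ξ j ^ 2) + 2 * π * (x j * ξ j)) := by
      simp only [EuclideanSpace.real_norm_sq_eq, PiLp.inner_apply, RCLike.inner_apply,
        conj_trivial, Finset.sum_add_distrib, Finset.mul_sum, Finset.sum_neg_distrib]
      simp only [mul_comm (ξ _)]
    rw [hphase, Complex.ofReal_sum, Finset.sum_mul, Complex.exp_sum, Complex.ofReal_prod,
      ← Finset.prod_mul_distrib]
  simp_rw [schrodingerSolK, hsplit]
  exact integral_euclideanSpace_prod_eq_prod F

lemma pow_le_re_schrodingerSolKOneDim {k N : ℕ} (hk : 1 ≤ k) {σ δ : ℝ} (hσ : 0 ≤ σ)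
    (hδ : 0 < δ) (hδ1 : δ ≤ 1) (hN : δ⁻¹ = N) (p q : Fin k → ℕ)
    (hp : ∀ m, (p m : ℝ) ≤ δ ^ (σ - 1) / (100 * (k : ℝ) ^ 3))
    (hq : ∀ m, (q m : ℝ) ≤ δ ^ (2 * σ - 1) / (100 * (k : ℝ) ^ 3)) {y t : ℝ}
    (hy : y = ∑ m : Fin k, (p m : ℝ) * δ ^ (-σ - (m : ℕ)))
    (ht : t = 2 * ∑ m : Fin k, (q m : ℝ) * δ ^ (-(2 * σ) - (m : ℕ))) :
    (δ ^ (1 - σ) / 2) ^ k ≤ (schrodingerSolKOneDim k δ σ y t).re := by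
  set L := ⌊δ ^ (-σ)⌋₊
  set S := Fintype.piFinset fun _ : Fin k => Finset.Icc 1 L
  have hcos : ∀ ℓ ∈ S, ∀ ξ, |ξ - ∑ r : Fin k, (ℓ r : ℝ) * δ ^ (σ + (r : ℕ))| ≤ δ ^ k →
      1 / 2 ≤ (Complex.exp (((-(π * t * ξ ^ 2) + 2 * π * (y * ξ) : ℝ) : ℂ) * Complex.I)).re := by
    intro ℓ hℓ ξ hξ
    have hℓ_le : ∀ r, (ℓ r : ℝ) ≤ δ ^ (-σ) := fun r =>
      (Nat.cast_le.2 (Finset.mem_Icc.1 (Fintype.mem_piFinset.1 hℓ r)).2).trans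
        (Nat.floor_le (by positivity))
    obtain ⟨M, hM⟩ := exists_int_abs_phase_sub_le hδ hδ1 hN hk p q ℓ hp hq hℓ_le hξ
    have hs : ∑ m : Fin k, (q m : ℝ) * δ ^ (-(2 * σ) - (m : ℕ)) = t / 2 := by rw [ht]; ring
    rw [← hy, hs] at hM
    rw [Complex.exp_ofReal_mul_I_re,
      show -(π * t * ξ ^ 2) + 2 * π * (y * ξ) = 2 * π * (y * ξ - t / 2 * ξ ^ 2) by ring]
    exact half_le_cos_two_pi_mul (hM.trans (by norm_num))
  have hL : δ ^ (1 - σ) / 2 ≤ L * δ := by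
    have hδσ : 1 ≤ δ ^ (-σ) := Real.one_le_rpow_of_pos_of_le_one_of_nonpos hδ hδ1 (by linarith)
    calc δ ^ (1 - σ) / 2 = δ ^ (-σ) / 2 * δ := by
          rw [sub_eq_neg_add, Real.rpow_add hδ, Real.rpow_one]; ring
      _ ≤ L * δ := by gcongr; exact div_two_le_natFloor hδσ
  calc (δ ^ (1 - σ) / 2) ^ k ≤ (L * δ) ^ k := by gcongr
    _ = S.card * (2 * δ ^ k * (1 / 2)) := by
      simp only [S, Fintype.card_piFinset, Finset.prod_const, Nat.card_Icc, Finset.card_univ,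
        Fintype.card_fin]
      push_cast
      ring
    _ ≤ _ := le_re_integral_mul_sum_indicator S _ (by positivity) (by fun_prop) hcos

/-- For fixed `k ≥ 1` and `n ≥ 2` there is `c > 0` depending only on `k`
and `n` such that for admissible `σ, δ` and every lattice point `(x,t)` of `Λ_k`,
`|u_k(x,t)| ≥ c δ^{k(n-1)(1-σ)}`. -/
theorem stmt11 (k n : ℕ) (hk : 1 ≤ k) (hn : 2 ≤ n) :
    ∃ c : ℝ, 0 < c ∧
      ∀ σ δ : ℝ, 0 < σ → σ < 1/2 → 0 < δ → δ < 1 →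
        (∃ N : ℕ, 0 < N ∧ δ⁻¹ = (N : ℝ)) →
        2 * δ ^ (1 - σ) ≤ 1 → 200 * (k : ℝ) ^ 3 ≤ δ ^ (σ - 1) →
      ∀ (p : Fin (n-1) → Fin k → ℕ) (q : Fin k → ℕ),
        (∀ j m, (p j m : ℝ) ≤ δ ^ (σ - 1) / (100 * (k : ℝ) ^ 3)) →
        (∀ m, (q m : ℝ) ≤ δ ^ (2*σ - 1) / (100 * (k : ℝ) ^ 3)) →
      ∀ (x : EuclideanSpace ℝ (Fin (n-1))) (t : ℝ),
        (∀ j, x j = ∑ m : Fin k, (p j m : ℝ) * δ ^ (-σ - (m : ℕ))) →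
        t = 2 * ∑ m : Fin k, (q m : ℝ) * δ ^ (-(2*σ) - (m : ℕ)) →
        c * δ ^ ((k : ℝ) * ((n : ℝ) - 1) * (1 - σ)) ≤
          ‖schrodingerSolK k n δ σ x t‖ := by
  refine ⟨(1 / 2) ^ (k * (n - 1)), by positivity, ?_⟩
  rintro σ δ hσ - hδ hδ1 ⟨N, -, hN⟩ - - p q hp hq x t hx ht
  have hexp : δ ^ ((k : ℝ) * ((n : ℝ) - 1) * (1 - σ)) = (δ ^ (1 - σ)) ^ (k * (n - 1)) := by
    rw [← Real.rpow_natCast, ← Real.rpow_mul hδ.le, Nat.cast_mul, Nat.cast_sub (by omega)]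
    push_cast
    congr 1
    ring
  calc (1 / 2) ^ (k * (n - 1)) * δ ^ ((k : ℝ) * ((n : ℝ) - 1) * (1 - σ))
      = ∏ _j : Fin (n - 1), (δ ^ (1 - σ) / 2) ^ k := by
        rw [hexp, Finset.prod_const, Finset.card_univ, Fintype.card_fin, ← pow_mul, ← mul_pow]
        ring
    _ ≤ ∏ j, ‖schrodingerSolKOneDim k δ σ (x j) t‖ :=
        Finset.prod_le_prod (fun _ _ => by positivity) fun j _ =>
          (pow_le_re_schrodingerSolKOneDim hk hσ.le hδ hδ1.le hN (p j) q (hp j) hq (hx j) ht).trans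
            (Complex.re_le_norm _)
    _ = ‖schrodingerSolK k n δ σ x t‖ := by rw [schrodingerSolK_eq_prod, norm_prod]
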